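/- arXiv:1105.4824 — 5 statements merged into one kernel-verified Lean document; each statement's English description precedes it below -/
import Mathlib

section
/- For every nonnegative integer n there exist nonnegative rational constants c_{0,n}, ..., c_{n,n} such that for all nonnegative integers s, r_s(n) = Σ_{i=0}^{n} c_{i,n}·C(s,i), where C(s,i) is the binomial coefficient. -/
/-!
Classify the representations `x : Fin s → ℤ` of `n` by their support `T`. Restricting to `T`
identifies those with support `T` with the representations of `n` by `#T` nonzero squares, whose
number `c_{#T}` depends only on `#T` and vanishes for `#T > n`. Since there are `C(s, i)` supports
of size `i`, `r_s(n) = ∑ i, c_i * C(s, i)`.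
-/

/-- `r s n` is the number of representations of `n` as an ordered sum of `s` integer squares. -/
noncomputable def sumOfSquaresRep (s n : ℕ) : ℕ :=
  Set.ncard {x : Fin s → ℤ | ∑ i, x i ^ 2 = (n : ℤ)}

open Finset

section SquareRepresentations

variable {ι κ : Type*} [Fintype ι] [Fintype κ] {n : ℕ}

lemma mem_Icc_of_sum_sq_eq {x : ι → ℤ} (hx : ∑ i, x i ^ 2 = n) (i : ι) :
    x i ∈ Icc (-(n : ℤ)) n := by
  have hle : |x i| ≤ n := calc
    |x i| ≤ x i ^ 2 := by simpa using Int.natAbs_le_self_sq (x i)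
    _ ≤ ∑ j, x j ^ 2 := single_le_sum (fun j _ => sq_nonneg (x j)) (mem_univ i)
    _ = n := hx
  exact mem_Icc.2 (abs_le.1 hle)

lemma sum_subtype_sq_eq {x : ι → ℤ} {T : Finset ι} (hT : ∀ i, x i ≠ 0 → i ∈ T) :
    ∑ j : T, x j ^ 2 = ∑ i, x i ^ 2 := by
  rw [sum_coe_sort T (fun i => x i ^ 2)]
  exact sum_subset (subset_univ T) fun i _ hi => by simp [not_imp_comm.1 (hT i) hi]

variable [DecidableEq ι] [DecidableEq κ]

variable (ι n) in
noncomputable def sqReps : Finset (ι → ℤ) :=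
  {x ∈ Fintype.piFinset fun _ => Icc (-(n : ℤ)) n | ∑ i, x i ^ 2 = n}

variable (ι n) in
noncomputable def nonzeroSqReps : Finset (ι → ℤ) :=
  {x ∈ sqReps ι n | ∀ i, x i ≠ 0}

@[simp]
lemma mem_sqReps {x : ι → ℤ} : x ∈ sqReps ι n ↔ ∑ i, x i ^ 2 = n := by
  simpa [sqReps] using fun hx i => mem_Icc.1 (mem_Icc_of_sum_sq_eq hx i)

@[simp]
lemma mem_nonzeroSqReps {x : ι → ℤ} :
    x ∈ nonzeroSqReps ι n ↔ ∑ i, x i ^ 2 = n ∧ ∀ i, x i ≠ 0 := by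
  simp [nonzeroSqReps]

lemma sumOfSquaresRep_eq_card (s n : ℕ) : sumOfSquaresRep s n = #(sqReps (Fin s) n) := by
  rw [sumOfSquaresRep, ← Set.ncard_coe_finset]
  congr 1
  ext x
  simp

lemma card_nonzeroSqReps_congr (e : ι ≃ κ) :
    #(nonzeroSqReps ι n) = #(nonzeroSqReps κ n) :=
  card_equiv (e.arrowCongr (Equiv.refl ℤ)) fun x => by
    simp only [mem_nonzeroSqReps, Equiv.arrowCongr_apply, Equiv.coe_refl, Function.comp_apply,
      id_eq, e.symm.sum_comp (fun i => x i ^ 2), e.forall_congr_left (p := fun i => x i ≠ 0)]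

lemma nonzeroSqReps_eq_empty (h : n < Fintype.card ι) : nonzeroSqReps ι n = ∅ := by
  refine eq_empty_of_forall_notMem fun x hx => h.not_ge ?_
  obtain ⟨hsum, hne⟩ := mem_nonzeroSqReps.1 hx
  have : (Fintype.card ι : ℤ) ≤ n := calc
    (Fintype.card ι : ℤ) = ∑ _i : ι, 1 := by simp
    _ ≤ ∑ i, x i ^ 2 :=
      sum_le_sum fun i _ => (one_le_sq_iff_one_le_abs _).2 (Int.one_le_abs (hne i))
    _ = n := hsum
  exact_mod_cast this

lemma card_sqReps_filter_support_eq (T : Finset ι) :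
    #{x ∈ sqReps ι n | ({i | x i ≠ 0} : Finset ι) = T} = #(nonzeroSqReps T n) := by
  refine card_nbij' (fun x j => x j) (fun y i => if h : i ∈ T then y ⟨i, h⟩ else 0)
    ?_ ?_ ?_ ?_
  · intro x hx
    simp only [coe_filter, mem_sqReps, Set.mem_ofPred_eq] at hx
    obtain ⟨hsum, rfl⟩ := hx
    simp only [mem_coe, mem_nonzeroSqReps]
    refine ⟨(sum_subtype_sq_eq fun i hi => by simpa using hi).trans hsum, fun j => ?_⟩
    exact (mem_filter.1 j.2).2
  · intro y hy
    simp only [mem_coe, mem_nonzeroSqReps] at hy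
    simp only [coe_filter, mem_sqReps, Set.mem_ofPred_eq]
    refine ⟨?_, ?_⟩
    · rw [← sum_subtype_sq_eq (T := T) fun i hi => ?_]
      · simpa using hy.1
      · by_contra hiT
        simp [hiT] at hi
    · ext i
      by_cases hiT : i ∈ T <;> simp [hiT, hy.2]
  · intro x hx
    simp only [coe_filter, mem_sqReps, Set.mem_ofPred_eq] at hx
    obtain ⟨-, rfl⟩ := hx
    funext i
    by_cases hi : x i = 0 <;> simp [hi]
  · intro y _
    simp

lemma card_sqReps_eq_sum_choose_mul :
    #(sqReps ι n) = ∑ i ∈ range (Fintype.card ι + 1),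
      (Fintype.card ι).choose i * #(nonzeroSqReps (Fin i) n) := by
  rw [card_eq_sum_card_fiberwise (f := fun x => ({i | x i ≠ 0} : Finset ι))
    (t := (univ : Finset ι).powerset) fun x _ => mem_powerset.2 (subset_univ _)]
  calc ∑ T ∈ (univ : Finset ι).powerset, #{x ∈ sqReps ι n | ({i | x i ≠ 0} : Finset ι) = T}
      = ∑ T ∈ (univ : Finset ι).powerset, #(nonzeroSqReps (Fin #T) n) :=
        sum_congr rfl fun T _ => by
          rw [card_sqReps_filter_support_eq, card_nonzeroSqReps_congr T.equivFin]
    _ = _ := by rw [sum_powerset_apply_card (fun m => #(nonzeroSqReps (Fin m) n))]; simp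

end SquareRepresentations

theorem stmt_3 (n : ℕ) :
    ∃ c : ℕ → ℚ, (∀ i, i ≤ n → 0 ≤ c i) ∧
      ∀ s : ℕ, (sumOfSquaresRep s n : ℚ) =
        ∑ i ∈ Finset.range (n + 1), c i * (s.choose i) := by
  refine ⟨fun i => #(nonzeroSqReps (Fin i) n), fun i _ => by positivity, fun s => ?_⟩
  have hvanish : ∀ i ≥ min s n + 1, (#(nonzeroSqReps (Fin i) n) : ℚ) * s.choose i = 0 := by
    intro i hi
    rcases le_total s n with hs | hn
    · simp [Nat.choose_eq_zero_of_lt (show s < i by omega)]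
    · simp [nonzeroSqReps_eq_empty (show n < Fintype.card (Fin i) by simp; omega)]
  rw [sumOfSquaresRep_eq_card, card_sqReps_eq_sum_choose_mul, Fintype.card_fin]
  push_cast
  simp_rw [mul_comm (s.choose _ : ℚ)]
  rw [eventually_constant_sum hvanish (n := s + 1) (by omega),
    eventually_constant_sum hvanish (n := n + 1) (by omega)]
end

section
/- Fix a positive integer n and let f(s) = C(2s, i)·n^{(1−s)/2} for a fixed integer i with 0 ≤ i ≤ n. Then f(s+1)/f(s) < (1/√n)·(1 + n/(2s−n))² whenever 2s > n, and consequently if 2s ≥ n + n/(n^{1/4} − 1) and n ≥ 2, then f(s+1) < f(s). -/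
open Real

set_option maxHeartbeats 1000000 in
theorem stmt_7 (n i : ℕ) (hn : 0 < n) (hi : i ≤ n)
    (f : ℕ → ℝ)
    (hf : ∀ s : ℕ, f s = (Nat.choose (2 * s) i : ℝ) * (n : ℝ) ^ ((1 - (s : ℝ)) / 2)) :
    (∀ s : ℕ, 2 * s > n →
      f (s + 1) / f s < (1 / Real.sqrt n) * (1 + (n : ℝ) / (2 * (s : ℝ) - n)) ^ 2) ∧
    (∀ s : ℕ, 2 ≤ n →
      2 * (s : ℝ) ≥ (n : ℝ) + (n : ℝ) / ((n : ℝ) ^ ((1 : ℝ) / 4) - 1) →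
      f (s + 1) < f s) := by
  have hn' : (0:ℝ) < n := by exact_mod_cast hn
  have hsqrt : 0 < Real.sqrt n := Real.sqrt_pos.mpr hn'
  have part1 : ∀ s : ℕ, 2 * s > n →
      f (s + 1) / f s < (1 / Real.sqrt n) * (1 + (n : ℝ) / (2 * (s : ℝ) - n)) ^ 2 := by
    intro s hs
    have hx : (n:ℝ) < 2 * s := by exact_mod_cast hs
    have hi2 : i ≤ 2 * s := le_trans hi (le_of_lt hs)
    have hd : (0:ℝ) < 2 * (s:ℝ) - n := by linarith
    have hin : (i:ℝ) ≤ n := by exact_mod_cast hi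
    have hi1 : (0:ℝ) < 2 * (s:ℝ) + 1 - i := by linarith
    have hi2' : (0:ℝ) < 2 * (s:ℝ) + 2 - i := by linarith
    -- choose ratio identity
    have c1 := Nat.choose_mul_succ_eq (2 * s) i
    have c2 := Nat.choose_mul_succ_eq (2 * s + 1) i
    rw [show 2 * s + 1 + 1 = 2 * s + 2 by ring] at c2
    have hD : (0:ℝ) < (Nat.choose (2 * s) i : ℝ) := by
      exact_mod_cast Nat.choose_pos hi2
    have c1' : (Nat.choose (2 * s) i : ℝ) * (2 * (s:ℝ) + 1)
        = (Nat.choose (2 * s + 1) i : ℝ) * (2 * (s:ℝ) + 1 - i) := by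
      have hle : (i:ℕ) ≤ 2 * s + 1 := by omega
      exact_mod_cast c1
    have c2' : (Nat.choose (2 * s + 1) i : ℝ) * (2 * (s:ℝ) + 2)
        = (Nat.choose (2 * s + 2) i : ℝ) * (2 * (s:ℝ) + 2 - i) := by
      have hle : (i:ℕ) ≤ 2 * s + 2 := by omega
      exact_mod_cast c2
    have key : (Nat.choose (2 * s + 2) i : ℝ) * ((2 * (s:ℝ) + 2 - i) * (2 * (s:ℝ) + 1 - i))
        = (Nat.choose (2 * s) i : ℝ) * ((2 * (s:ℝ) + 2) * (2 * (s:ℝ) + 1)) := by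
      linear_combination (-(2 * (s:ℝ) + 1 - (i:ℝ))) * c2' + (-(2 * (s:ℝ) + 2)) * c1'
    -- rpow ratio
    have hr : (n:ℝ) ^ ((1 - ((s:ℝ) + 1)) / 2) / (n:ℝ) ^ ((1 - (s:ℝ)) / 2)
        = 1 / Real.sqrt n := by
      rw [← Real.rpow_sub hn']
      have : (1 - ((s:ℝ) + 1)) / 2 - (1 - (s:ℝ)) / 2 = -(1/2) := by ring
      rw [this, Real.rpow_neg (le_of_lt hn'), ← Real.sqrt_eq_rpow, one_div]
    have hN2 : (0:ℝ) < (n:ℝ) ^ ((1 - (s:ℝ)) / 2) := Real.rpow_pos_of_pos hn' _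
    have hratio : f (s + 1) / f s
        = ((Nat.choose (2 * s + 2) i : ℝ) / (Nat.choose (2 * s) i : ℝ)) * (1 / Real.sqrt n) := by
      rw [hf (s+1), hf s, show 2 * (s + 1) = 2 * s + 2 by ring]
      push_cast
      rw [← hr, div_mul_div_comm]
    rw [hratio]
    have hCD : (Nat.choose (2 * s + 2) i : ℝ) / (Nat.choose (2 * s) i : ℝ)
        = ((2 * (s:ℝ) + 2) * (2 * (s:ℝ) + 1)) / ((2 * (s:ℝ) + 2 - i) * (2 * (s:ℝ) + 1 - i)) := by
      rw [div_eq_div_iff (ne_of_gt hD) (by positivity)]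
      linear_combination key
    rw [hCD, one_add_div (ne_of_gt hd), div_pow, mul_comm (1 / Real.sqrt n)]
    have e1 : (2 * (s:ℝ) + 2 - n) * (2 * (s:ℝ) + 1 - n)
        ≤ (2 * (s:ℝ) + 2 - i) * (2 * (s:ℝ) + 1 - i) := by
      apply mul_le_mul (by linarith) (by linarith) (by linarith) (by linarith)
    have e2 : (2 * (s:ℝ) + 2) * (2 * (s:ℝ) + 1) * (2 * (s:ℝ) - n) ^ 2
        < (2 * (s:ℝ)) ^ 2 * ((2 * (s:ℝ) + 2 - n) * (2 * (s:ℝ) + 1 - n)) := by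
      have p1 : (0:ℝ) < (n:ℝ) * ((2 * (s:ℝ)) * (2 * (s:ℝ) - n)) :=
        mul_pos hn' (mul_pos (by linarith) hd)
      have p2 : (0:ℝ) < (n:ℝ) * (4 * (2 * (s:ℝ)) - 2 * n) :=
        mul_pos hn' (by linarith)
      nlinarith [p1, p2]
    have e3 := mul_le_mul_of_nonneg_left e1 (sq_nonneg (2 * (s:ℝ)))
    have hmain : ((2 * (s:ℝ) + 2) * (2 * (s:ℝ) + 1)) / ((2 * (s:ℝ) + 2 - i) * (2 * (s:ℝ) + 1 - i))
        < (2 * (s:ℝ) - n + n) ^ 2 / (2 * (s:ℝ) - n) ^ 2 := by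
      rw [div_lt_div_iff₀ (by positivity) (by positivity)]
      nlinarith [e2, e3]
    exact mul_lt_mul_of_pos_right hmain (by positivity)
  refine ⟨part1, ?_⟩
  intro s hn2 hs
  have hn2' : (2:ℝ) ≤ n := by exact_mod_cast hn2
  have ht : (1:ℝ) < (n:ℝ) ^ ((1:ℝ)/4) :=
    Real.one_lt_rpow_iff_of_pos hn' |>.mpr (Or.inl ⟨by linarith, by norm_num⟩)
  have ht' : (0:ℝ) < (n:ℝ) ^ ((1:ℝ)/4) - 1 := by linarith
  have hnt : (0:ℝ) < (n:ℝ) / ((n:ℝ) ^ ((1:ℝ)/4) - 1) := by positivity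
  have hx : (n:ℝ) < 2 * s := by linarith
  have hsn : 2 * s > n := by exact_mod_cast hx
  have hd : (0:ℝ) < 2 * (s:ℝ) - n := by linarith
  have h1 := part1 s hsn
  have hfs : 0 < f s := by
    rw [hf s]
    have hi2 : i ≤ 2 * s := le_trans hi (le_of_lt hsn)
    have hD : (0:ℝ) < (Nat.choose (2 * s) i : ℝ) := by exact_mod_cast Nat.choose_pos hi2
    exact mul_pos hD (Real.rpow_pos_of_pos hn' _)
  rw [← div_lt_one hfs]
  refine lt_of_lt_of_le h1 ?_
  have hdge : (n:ℝ) / ((n:ℝ) ^ ((1:ℝ)/4) - 1) ≤ 2 * (s:ℝ) - n := by linarith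
  have hb : (n:ℝ) / (2 * (s:ℝ) - n) ≤ (n:ℝ) ^ ((1:ℝ)/4) - 1 := by
    rw [div_le_iff₀ hd]
    have h2 := (div_le_iff₀ ht').mp hdge
    linarith [mul_comm ((n:ℝ) ^ ((1:ℝ)/4) - 1) (2 * (s:ℝ) - (n:ℝ)), h2,
      mul_comm (2 * (s:ℝ) - (n:ℝ)) ((n:ℝ) ^ ((1:ℝ)/4) - 1)]
  have hb' : 1 + (n:ℝ) / (2 * (s:ℝ) - n) ≤ (n:ℝ) ^ ((1:ℝ)/4) := by linarith
  have hbpos : (0:ℝ) < 1 + (n:ℝ) / (2 * (s:ℝ) - n) := by positivity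
  have hsq : (1 + (n:ℝ) / (2 * (s:ℝ) - n)) ^ 2 ≤ ((n:ℝ) ^ ((1:ℝ)/4)) ^ 2 :=
    pow_le_pow_left₀ (le_of_lt hbpos) hb' 2
  have hsq2 : ((n:ℝ) ^ ((1:ℝ)/4)) ^ 2 = Real.sqrt n := by
    rw [sq, ← Real.rpow_add hn', Real.sqrt_eq_rpow]
    norm_num
  calc 1 / Real.sqrt ↑n * (1 + ↑n / (2 * ↑s - ↑n)) ^ 2
      ≤ 1 / Real.sqrt ↑n * Real.sqrt n := by
        apply mul_le_mul_of_nonneg_left _ (by positivity)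
        rw [← hsq2]; exact hsq
    _ = 1 := by field_simp
end

section
/- For fixed positive integer n ≥ 2, the quantity r_{2s}(n)/n^{(s−1)/2} is a strictly decreasing function of the integer s, provided 2s ≥ n + n/(n^{1/4} − 1). -/
/-!
Double count the pairs `(x, (i, j))` where `x` represents `n` as a sum of `k + 2` squares and
`i ≠ j` are coordinates with `x i = x j = 0`. Since `x` has at most `n` nonzero coordinates, each
`x` lies in at least `(k + 2 - n) (k + 1 - n)` pairs, while each `(i, j)` lies in exactly `r_k(n)`
of them. Hence `r_{k+2}(n) (k + 2 - n) (k + 1 - n) ≤ r_k(n) (k + 2) (k + 1)`. For `k = 2s` the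
hypothesis on `s` gives `t < n^{1/4} (t - n)` for `t = k + 1, k + 2`, so
`(k + 2) (k + 1) < √n (k + 2 - n) (k + 1 - n)`, and `r_k(n) > 0` as `n ≤ k`.
-/

open Real

namespace SumOfSquares

open Finset

variable {ι κ : Type*} [Fintype ι] [Fintype κ]

theorem finite_setOf_sum_sq_eq (n : ℕ) : {x : ι → ℤ | ∑ i, x i ^ 2 = (n : ℤ)}.Finite := by
  refine (Set.Finite.pi (t := fun _ : ι => Set.Icc (-(n : ℤ)) n) fun _ => Set.finite_Icc _ _).subset
    fun x hx i _ => ?_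
  have hsq : x i ^ 2 ≤ n := hx ▸ single_le_sum (fun j _ => sq_nonneg (x j)) (mem_univ i)
  exact abs_le.mp (Int.abs_eq_natAbs (x i) ▸ (Int.natAbs_le_self_sq (x i)).trans hsq)

noncomputable def reps (ι : Type*) [Fintype ι] (n : ℕ) : Finset (ι → ℤ) :=
  (finite_setOf_sum_sq_eq (ι := ι) n).toFinset

@[simp]
theorem mem_reps {n : ℕ} {x : ι → ℤ} : x ∈ reps ι n ↔ ∑ i, x i ^ 2 = n :=
  Set.Finite.mem_toFinset _

theorem sumOfSquaresRep_eq_card_reps (k n : ℕ) : sumOfSquaresRep k n = #(reps (Fin k) n) :=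
  Set.ncard_eq_toFinset_card _ _

theorem card_reps_congr (e : ι ≃ κ) (n : ℕ) : #(reps ι n) = #(reps κ n) :=
  card_equiv (e.arrowCongr (Equiv.refl ℤ)) fun x => by
    simp [← e.sum_comp]

theorem card_reps_pos {n : ℕ} (h : n ≤ Fintype.card ι) : 0 < #(reps ι n) := by
  classical
  obtain ⟨S, -, hS⟩ := exists_subset_card_eq (s := (univ : Finset ι)) h
  refine card_pos.mpr ⟨fun i => if i ∈ S then 1 else 0, mem_reps.mpr ?_⟩
  simp [hS]

theorem sum_sq_eq_sum_subtype_of_forall_mem_eq_zero [DecidableEq ι] {S : Finset ι} {x : ι → ℤ}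
    (hx : ∀ i ∈ S, x i = 0) : ∑ i, x i ^ 2 = ∑ i : {i // i ∉ S}, x i ^ 2 := by
  rw [← Fintype.sum_subtype_add_sum_subtype (· ∈ S)]
  simp [hx]

theorem card_filter_reps_forall_mem_eq_zero [DecidableEq ι] (S : Finset ι) (n : ℕ) :
    #{x ∈ reps ι n | ∀ i ∈ S, x i = 0} = #(reps {i // i ∉ S} n) := by
  refine card_nbij' (fun x i => x i) (fun y i => if h : i ∈ S then 0 else y ⟨i, h⟩)
    ?_ ?_ ?_ ?_
  · intro x hx
    simp only [coe_filter, Set.mem_ofPred_eq, mem_reps] at hx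
    simpa [← sum_sq_eq_sum_subtype_of_forall_mem_eq_zero hx.2] using hx.1
  · intro y hy
    have hvanish : ∀ i ∈ S, (fun i => if h : i ∈ S then 0 else y ⟨i, h⟩) i = 0 := by
      intro i hi; simp [hi]
    simp only [coe_filter, Set.mem_ofPred_eq, mem_reps, mem_coe] at hy ⊢
    refine ⟨?_, hvanish⟩
    rw [sum_sq_eq_sum_subtype_of_forall_mem_eq_zero hvanish, ← hy]
    exact sum_congr rfl fun i _ => by simp [i.2]
  · intro x hx
    simp only [coe_filter, Set.mem_ofPred_eq] at hx
    funext i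
    by_cases h : i ∈ S
    · simp [h, hx.2 i h]
    · simp [h]
  · intro y _
    funext i
    simp [i.2]

theorem card_le_sum_sq (x : ι → ℤ) : (#{i | x i ≠ 0} : ℤ) ≤ ∑ i, x i ^ 2 := by
  classical
  calc (#{i | x i ≠ 0} : ℤ) = ∑ i with x i ≠ 0, 1 := by simp
    _ ≤ ∑ i with x i ≠ 0, x i ^ 2 := sum_le_sum fun i hi => by
        have := sq_pos_of_ne_zero (mem_filter.mp hi).2
        omega
    _ ≤ ∑ i, x i ^ 2 := sum_le_sum_of_subset_of_nonneg (subset_univ _) fun i _ _ => sq_nonneg _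

theorem card_sub_le_card_filter_eq_zero {n : ℕ} {x : ι → ℤ} (hx : x ∈ reps ι n) :
    Fintype.card ι - n ≤ #{i | x i = 0} := by
  classical
  have hsupport : #{i | x i ≠ 0} ≤ n := by
    have := card_le_sum_sq x
    rw [mem_reps.mp hx] at this
    exact_mod_cast this
  have hsplit := card_filter_add_card_filter_not (s := univ) (fun i => x i = 0)
  rw [card_univ] at hsplit
  simp only [ne_eq] at hsupport
  omega

theorem card_reps_mul_le (k n : ℕ) :
    #(reps (Fin (k + 2)) n) * ((k + 2 - n) * (k + 1 - n)) ≤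
      #(reps (Fin k) n) * ((k + 2) * (k + 1)) := by
  have hpairs : #(univ : Finset (Fin (k + 2))).offDiag = (k + 2) * (k + 1) := by
    rw [offDiag_card, card_univ, Fintype.card_fin, ← Nat.mul_sub_one]
    rfl
  rw [← hpairs]
  refine (card_mul_le_card_mul (s := reps (Fin (k + 2)) n) (t := univ.offDiag)
    (fun x p => ∀ i ∈ ({p.1, p.2} : Finset (Fin (k + 2))), x i = 0)
    (fun x hx => ?_) (fun p hp => ?_)).trans_eq (Nat.mul_comm _ _)
  · have hzeros := card_sub_le_card_filter_eq_zero hx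
    rw [Fintype.card_fin] at hzeros
    have habove : {p ∈ (univ : Finset (Fin (k + 2))).offDiag |
        ∀ i ∈ ({p.1, p.2} : Finset _), x i = 0} = ({i | x i = 0} : Finset _).offDiag := by
      ext p
      simp only [mem_filter, mem_offDiag, mem_univ, true_and, mem_insert, mem_singleton,
        forall_eq_or_imp, forall_eq]
      tauto
    rw [bipartiteAbove, habove, offDiag_card, ← Nat.mul_sub_one]
    exact Nat.mul_le_mul hzeros (by omega)
  · have hne : p.1 ≠ p.2 := (mem_offDiag.mp hp).2.2
    have hcompl : Fintype.card {i // i ∉ ({p.1, p.2} : Finset (Fin (k + 2)))} = k := by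
      rw [Fintype.card_subtype_compl, Fintype.card_coe, card_pair hne, Fintype.card_fin]
      rfl
    rw [bipartiteBelow, ← card_reps_congr (Fintype.equivFinOfCardEq hcompl) n]
    exact Nat.le_of_eq (by convert card_filter_reps_forall_mem_eq_zero {p.1, p.2} n)

theorem sumOfSquaresRep_add_two_lt_mul {k n : ℕ} {c : ℝ} (hnk : n ≤ k)
    (hc : ((k : ℝ) + 2) * (k + 1) < ((k : ℝ) + 2 - n) * (k + 1 - n) * c) :
    (sumOfSquaresRep (k + 2) n : ℝ) < sumOfSquaresRep k n * c := by
  rw [sumOfSquaresRep_eq_card_reps, sumOfSquaresRep_eq_card_reps]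
  set A : ℝ := (#(reps (Fin (k + 2)) n) : ℝ)
  set B : ℝ := (#(reps (Fin k) n) : ℝ)
  have hcount : A * (((k : ℝ) + 2 - n) * (k + 1 - n)) ≤ B * (((k : ℝ) + 2) * (k + 1)) := by
    have := card_reps_mul_le k n
    rw [← Nat.cast_le (α := ℝ)] at this
    push_cast [Nat.cast_sub (by omega : n ≤ k + 2), Nat.cast_sub (by omega : n ≤ k + 1)] at this
    exact this
  have hB : 0 < B := Nat.cast_pos.mpr (card_reps_pos (ι := Fin k) (by simpa using hnk))
  have hgap : 0 < ((k : ℝ) + 2 - n) * (k + 1 - n) := by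
    have : (n : ℝ) ≤ k := by exact_mod_cast hnk
    nlinarith
  refine lt_of_mul_lt_mul_right ?_ hgap.le
  calc A * (((k : ℝ) + 2 - n) * (k + 1 - n)) ≤ B * (((k : ℝ) + 2) * (k + 1)) := hcount
    _ < B * (((k : ℝ) + 2 - n) * (k + 1 - n) * c) := mul_lt_mul_of_pos_left hc hB
    _ = B * c * (((k : ℝ) + 2 - n) * (k + 1 - n)) := by ring

end SumOfSquares

theorem lt_sub_mul_of_add_div_lt {n q t : ℝ} (hq : 1 < q) (ht : n + n / (q - 1) < t) :
    t < (t - n) * q := by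
  have := (div_lt_iff₀ (sub_pos.mpr hq)).mp (lt_sub_iff_add_lt'.mpr ht)
  linarith

theorem add_two_mul_add_one_lt_sub_mul_sub_mul_sq {n q m : ℝ} (hn : 0 ≤ n) (hq : 1 < q)
    (hm : n + n / (q - 1) ≤ m) :
    (m + 2) * (m + 1) < (m + 2 - n) * (m + 1 - n) * q ^ 2 := by
  have h1 := lt_sub_mul_of_add_div_lt hq (hm.trans_lt (lt_add_one m))
  have h2 := lt_sub_mul_of_add_div_lt hq (hm.trans_lt (by linarith : m < m + 2))
  have hm0 : 0 ≤ m := by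
    have := div_nonneg hn (sub_pos.mpr hq).le
    linarith
  calc (m + 2) * (m + 1) < ((m + 2 - n) * q) * ((m + 1 - n) * q) :=
        mul_lt_mul'' h2 h1 (by linarith) (by linarith)
    _ = (m + 2 - n) * (m + 1 - n) * q ^ 2 := by ring

open SumOfSquares in
theorem stmt_8 (n : ℕ) (hn : 2 ≤ n) (s : ℕ)
    (hs : 2 * (s : ℝ) ≥ (n : ℝ) + (n : ℝ) / ((n : ℝ) ^ ((1 : ℝ) / 4) - 1)) :
    (sumOfSquaresRep (2 * (s + 1)) n : ℝ) / (n : ℝ) ^ ((((s : ℝ) + 1) - 1) / 2) <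
      (sumOfSquaresRep (2 * s) n : ℝ) / (n : ℝ) ^ (((s : ℝ) - 1) / 2) := by
  have hn1 : (1 : ℝ) < n := by exact_mod_cast hn
  have hq : 1 < (n : ℝ) ^ ((1 : ℝ) / 4) := one_lt_rpow hn1 (by norm_num)
  have hq2 : ((n : ℝ) ^ ((1 : ℝ) / 4)) ^ 2 = (n : ℝ) ^ ((1 : ℝ) / 2) := by
    rw [← rpow_natCast, ← rpow_mul (by positivity)]
    norm_num
  have hns : n ≤ 2 * s := by
    have : 0 ≤ (n : ℝ) / ((n : ℝ) ^ ((1 : ℝ) / 4) - 1) := div_nonneg (by positivity) (by linarith)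
    exact_mod_cast (by linarith : (n : ℝ) ≤ 2 * s)
  have hrep : (sumOfSquaresRep (2 * s + 2) n : ℝ) <
      sumOfSquaresRep (2 * s) n * (n : ℝ) ^ ((1 : ℝ) / 2) := by
    rw [← hq2]
    exact sumOfSquaresRep_add_two_lt_mul hns
      (by exact_mod_cast add_two_mul_add_one_lt_sub_mul_sub_mul_sq (Nat.cast_nonneg n) hq hs.le)
  rw [show 2 * (s + 1) = 2 * s + 2 by ring,
    show ((s : ℝ) + 1 - 1) / 2 = (s - 1) / 2 + 1 / 2 by ring, rpow_add (by positivity), ← div_div,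
    div_right_comm, div_lt_div_iff_of_pos_right (by positivity), div_lt_iff₀ (by positivity)]
  exact hrep
end

section
/- For all real x ≥ 1, Σ_{n ≤ x} d(n) ≤ x·log(x) + (γ + 1)·x, where d(n) is the number of positive divisors of n and γ is the Euler–Mascheroni constant. -/
/-!
Counting the pairs `(d, m)` with `d * m ≤ x` by `d` gives `∑_{n ≤ x} d(n) = ∑_{d ≤ x} ⌊x / d⌋
≤ x H_⌊x⌋ ≤ x (1 + log x)`, and `γ > 0` absorbs the rest.
-/

open Real Finset

theorem Nat.sum_Icc_card_divisors_eq_sum_div (N : ℕ) :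
    ∑ n ∈ Icc 1 N, n.divisors.card = ∑ d ∈ Icc 1 N, N / d := by
  simpa [← ArithmeticFunction.sigma_zero_apply, ← Icc_add_one_left_eq_Ioc] using
    ArithmeticFunction.sum_Ioc_sigma0_eq_sum_div N

theorem sum_Icc_card_divisors_le_mul_harmonic {x : ℝ} (hx : 0 ≤ x) :
    ∑ n ∈ Icc 1 ⌊x⌋₊, (n.divisors.card : ℝ) ≤ x * harmonic ⌊x⌋₊ := by
  rw [← Nat.cast_sum, Nat.sum_Icc_card_divisors_eq_sum_div, harmonic_eq_sum_Icc, Nat.cast_sum,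
    Rat.cast_sum, mul_sum]
  gcongr with d
  calc ((⌊x⌋₊ / d : ℕ) : ℝ) ≤ (⌊x⌋₊ : ℝ) / d := Nat.cast_div_le
    _ ≤ x / d := by gcongr; exact Nat.floor_le hx
    _ = x * ((d : ℚ)⁻¹ : ℚ) := by push_cast; rfl

theorem stmt_11 (x : ℝ) (hx : 1 ≤ x) :
    ∑ n ∈ Finset.Icc 1 ⌊x⌋₊, (n.divisors.card : ℝ) ≤
      x * Real.log x + (Real.eulerMascheroniConstant + 1) * x := by
  have hγ : 0 < eulerMascheroniConstant := one_half_pos.trans one_half_lt_eulerMascheroniConstant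
  calc ∑ n ∈ Icc 1 ⌊x⌋₊, (n.divisors.card : ℝ)
      ≤ x * harmonic ⌊x⌋₊ := sum_Icc_card_divisors_le_mul_harmonic (by linarith)
    _ ≤ x * (1 + log x) := by gcongr; exact harmonic_floor_le_one_add_log x hx
    _ ≤ x * log x + (eulerMascheroniConstant + 1) * x := by nlinarith
end

section
/- For all real x and all y ≥ √3/8, 1 + 2·Σ_{n≥1} e^{−2πn²y} ≤ 1.52182, and hence |θ(x+iy)| ≤ 1.52182 where θ is the Jacobi theta function. -/
/-!
With `q = e^{-2πy}` the real series is `∑ q^{(n+1)²}`, and `|e^{2πin²(x+iy)}| = q^{n²}`, so the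
complex bound follows from the real one by the triangle inequality. For the real series keep
the terms `q` and `q⁴` and dominate the rest by a geometric series: `(n+3)² ≥ 6n + 9` gives
`∑_{n≥3} q^{n²} ≤ q⁹ / (1 - q⁶)`. For `y ≥ √3/8` one has `2πy ≥ 1.360349`, hence
`q ≤ 0.25657122`, and then `1 + 2(q + q⁴ + q⁹/(1 - q⁶)) ≤ 1.52182`.
-/

open Real Complex

lemma summable_pow_sq_succ {q : ℝ} (hq0 : 0 ≤ q) (hq1 : q < 1) :
    Summable (fun n : ℕ => q ^ ((n + 1) ^ 2)) :=
  (summable_geometric_of_lt_one hq0 hq1).of_nonneg_of_le (fun _ => by positivity)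
    fun n => pow_le_pow_of_le_one hq0 hq1.le (by nlinarith)

lemma tsum_pow_sq_succ_le {q c : ℝ} (hq0 : 0 ≤ q) (hqc : q ≤ c) (hc1 : c < 1) :
    ∑' n : ℕ, q ^ ((n + 1) ^ 2) ≤ c + c ^ 4 + c ^ 9 * (1 - c ^ 6)⁻¹ := by
  have hc0 : 0 ≤ c := hq0.trans hqc
  have hc6 : c ^ 6 < 1 := pow_lt_one₀ hc0 hc1 (by norm_num)
  have hsum := summable_pow_sq_succ hq0 (hqc.trans_lt hc1)
  have hle (n k : ℕ) (hk : k ≤ (n + 1) ^ 2) : q ^ ((n + 1) ^ 2) ≤ c ^ k :=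
    (pow_le_pow_left₀ hq0 hqc _).trans (pow_le_pow_of_le_one hc0 hc1.le hk)
  have htail : ∑' n : ℕ, q ^ ((n + 2 + 1) ^ 2) ≤ c ^ 9 * (1 - c ^ 6)⁻¹ := by
    rw [← tsum_geometric_of_lt_one (by positivity) hc6, ← tsum_mul_left]
    refine ((summable_nat_add_iff 2).mpr hsum).tsum_le_tsum (fun n => ?_)
      ((summable_geometric_of_lt_one (by positivity) hc6).mul_left _)
    rw [← pow_mul, ← pow_add]
    exact hle (n + 2) _ (by nlinarith)
  rw [← hsum.sum_add_tsum_nat_add 2, Finset.sum_range_succ, Finset.sum_range_one]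
  have h0 : q ^ ((0 + 1) ^ 2) ≤ c := by simpa using hle 0 1 le_rfl
  have h1 : q ^ ((1 + 1) ^ 2) ≤ c ^ 4 := hle 1 4 le_rfl
  push_cast at h0 h1 htail ⊢
  linarith

lemma norm_cexp_two_pi_I_mul (m x y : ℝ) :
    ‖Complex.exp (2 * π * I * m * (x + y * I))‖ = Real.exp (-2 * π * m * y) := by
  rw [Complex.norm_exp]
  congr 1
  simp

lemma norm_one_add_two_mul_tsum_le {f : ℕ → ℂ} (hf : Summable (fun n => ‖f n‖)) :
    ‖1 + 2 * ∑' n, f n‖ ≤ 1 + 2 * ∑' n, ‖f n‖ :=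
  calc ‖1 + 2 * ∑' n, f n‖ ≤ ‖(1 : ℂ)‖ + ‖2 * ∑' n, f n‖ := norm_add_le _ _
    _ = 1 + 2 * ‖∑' n, f n‖ := by simp
    _ ≤ 1 + 2 * ∑' n, ‖f n‖ := by gcongr; exact norm_tsum_le_tsum_norm hf

lemma exp_neg_two_pi_mul_le {y : ℝ} (hy : √3 / 8 ≤ y) :
    Real.exp (-(2 * π * y)) ≤ 0.25657122 := by
  have hsqrt3 : (1.7320508 : ℝ) ≤ √3 := Real.le_sqrt_of_sq_le (by norm_num)
  have hpi : (3.141592 : ℝ) < π := Real.pi_gt_d6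
  have h2piy : (1.360349 : ℝ) ≤ 2 * π * y := by nlinarith
  have hexp : 1 / 0.25657122 ≤ Real.exp 1.360349 :=
    le_trans (by norm_num [Finset.sum_range_succ, Nat.factorial])
      (Real.sum_le_exp_of_nonneg (by norm_num) 18)
  calc Real.exp (-(2 * π * y)) ≤ Real.exp (-1.360349) := Real.exp_le_exp.mpr (by linarith)
    _ ≤ 0.25657122 := by
      rw [Real.exp_neg, inv_le_comm₀ (Real.exp_pos _) (by norm_num), ← one_div]
      exact hexp

theorem stmt_14 (x y : ℝ) (hy : Real.sqrt 3 / 8 ≤ y) :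
    1 + 2 * ∑' n : ℕ, Real.exp (-2 * Real.pi * ((n : ℝ) + 1) ^ 2 * y) ≤ 1.52182 ∧
    ‖1 + 2 * ∑' n : ℕ,
        Complex.exp (2 * Real.pi * Complex.I * ((n : ℂ) + 1) ^ 2 * (x + y * Complex.I))‖
      ≤ 1.52182 := by
  set q := Real.exp (-(2 * π * y))
  have hterm (n : ℕ) : Real.exp (-2 * π * ((n : ℝ) + 1) ^ 2 * y) = q ^ ((n + 1) ^ 2) := by
    rw [← Real.exp_nat_mul]
    push_cast
    ring_nf
  have hq := exp_neg_two_pi_mul_le hy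
  have hreal : 1 + 2 * ∑' n : ℕ, Real.exp (-2 * π * ((n : ℝ) + 1) ^ 2 * y) ≤ 1.52182 := by
    simp_rw [hterm]
    have := tsum_pow_sq_succ_le (Real.exp_nonneg _) hq (by norm_num)
    norm_num at this ⊢
    linarith
  refine ⟨hreal, ?_⟩
  have hnorm (n : ℕ) : ‖Complex.exp (2 * π * I * ((n : ℂ) + 1) ^ 2 * (x + y * I))‖
      = Real.exp (-2 * π * ((n : ℝ) + 1) ^ 2 * y) := by
    exact_mod_cast norm_cexp_two_pi_I_mul (((n : ℝ) + 1) ^ 2) x y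
  have hsum : Summable fun n : ℕ => Real.exp (-2 * π * ((n : ℝ) + 1) ^ 2 * y) := by
    simpa only [hterm] using summable_pow_sq_succ (Real.exp_nonneg _) (hq.trans_lt (by norm_num))
  calc _ ≤ 1 + 2 * ∑' n : ℕ, ‖Complex.exp (2 * π * I * ((n : ℂ) + 1) ^ 2 * (x + y * I))‖ :=
        norm_one_add_two_mul_tsum_le (by simpa only [hnorm] using hsum)
    _ ≤ 1.52182 := by simpa only [hnorm] using hreal
end
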